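/- arXiv:2102.00384 — 2 statements merged into one kernel-verified Lean document; each statement's English description precedes it below -/
import Mathlib

section
/- Fix π ∈ [−1,1] and ρ > 0. Let Ω be a finite index set with probability weights {p_ω}, let Θ: Ω → [−1,1], and for each ω let μ_ω be a probability measure on [−1,1] with mean Θ(ω). Define Risk(Z) = Σ_ω p_ω ∫ |y − π| · |sgn(Z(ω)) − sgn(y − π)| dμ_ω(y) and MAE(Θ₁,Θ₂) = Σ_ω p_ω |Θ₁(ω) − Θ₂(ω)|. Assume that Σ_{ω: |Θ(ω)−π| ≤ t} p_ω = 0 for every 0 ≤ t < ρ (the α = ∞ smoothness case). Then for Θ̄ = sgn(Θ − π) and every Z: Ω → ℝ, Risk(Z) − Risk(Θ̄) ≥ (ρ/2) · MAE(sgn Z, sgn Θ̄). -/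
/-!
The loss `|y - π| · |sgn c - sgn (y - π)|` equals `|y - π| - sgn c · (y - π)`, which is affine
in `y` once `c` is fixed, so the risk of a prediction `c` at `ω` is
`∫ |y - π| dμ_ω - sgn c · (Θ ω - π)`.
Hence the excess risk of `Z` over the Bayes rule `sgn (Θ - π)` at `ω` is exactly
`|Θ ω - π| · |sgn (Z ω) - sgn (Θ ω - π)|`, and the smoothness assumption says that
`|Θ ω - π| ≥ ρ` wherever `p ω ≠ 0`.
-/

open MeasureTheory

/-- The sign function: `sgn y = 1` if `y ≥ 0` and `-1` otherwise. -/
noncomputable def sgn (y : ℝ) : ℝ := if 0 ≤ y then 1 else -1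

/-- The weighted classification risk at level `π`:
`Risk(Z) = Σ_ω p_ω ∫ |y − π| · |sgn(Z(ω)) − sgn(y − π)| dμ_ω(y)`. -/
noncomputable def Risk {I : Type*} [Fintype I] (p : I → ℝ) (μ : I → Measure ℝ)
    (π : ℝ) (Z : I → ℝ) : ℝ :=
  ∑ ω, p ω * ∫ y, |y - π| * |sgn (Z ω) - sgn (y - π)| ∂(μ ω)

/-- The mean absolute error `MAE(Θ₁,Θ₂) = Σ_ω p_ω |Θ₁(ω) − Θ₂(ω)|`. -/
noncomputable def MAE {I : Type*} [Fintype I] (p : I → ℝ) (A B : I → ℝ) : ℝ :=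
  ∑ ω, p ω * |A ω - B ω|

lemma sgn_sgn (x : ℝ) : sgn (sgn x) = sgn x := by
  unfold sgn; split <;> norm_num

lemma sgn_mul_self (x : ℝ) : sgn x * x = |x| := by
  unfold sgn; split_ifs with hx
  · rw [one_mul, abs_of_nonneg hx]
  · rw [neg_one_mul, abs_of_neg (not_le.mp hx)]

lemma abs_mul_abs_sgn_sub_sgn (c x : ℝ) : |x| * |sgn c - sgn x| = |x| - sgn c * x := by
  unfold sgn
  rcases le_or_gt 0 c with hc | hc <;> rcases le_or_gt 0 x with hx | hx
  · simp [hc, hx, abs_of_nonneg hx]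
  · rw [if_pos hc, if_neg (not_le.mpr hx), abs_of_neg hx]; norm_num; ring
  · rw [if_neg (not_le.mpr hc), if_pos hx, abs_of_nonneg hx]; norm_num; ring
  · rw [if_neg (not_le.mpr hc), if_neg (not_le.mpr hx), abs_of_neg hx]; norm_num

lemma integrable_id_of_measure_compl_Icc_eq_zero {μ : Measure ℝ} [IsFiniteMeasure μ] {a b : ℝ}
    (h : μ (Set.Icc a b)ᶜ = 0) : Integrable (fun y => y) μ := by
  have hae : ∀ᵐ y ∂μ, y ∈ Set.Icc a b :=
    (measure_eq_zero_iff_ae_notMem.mp h).mono fun _ hy => not_not.mp hy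
  refine .of_bound aestronglyMeasurable_id (max |a| |b|) ?_
  filter_upwards [hae] with y hy using abs_le_max_abs_abs hy.1 hy.2

lemma integral_abs_sub_mul_abs_sgn_sub_sgn {μ : Measure ℝ} [IsProbabilityMeasure μ]
    (hμ : Integrable (fun y => y) μ) (π c : ℝ) :
    ∫ y, |y - π| * |sgn c - sgn (y - π)| ∂μ
      = (∫ y, |y - π| ∂μ) - sgn c * ((∫ y, y ∂μ) - π) := by
  have hsub : Integrable (fun y => y - π) μ := hμ.sub (integrable_const π)
  calc ∫ y, |y - π| * |sgn c - sgn (y - π)| ∂μ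
      = ∫ y, (|y - π| - sgn c * (y - π)) ∂μ := by
        simp only [abs_mul_abs_sgn_sub_sgn]
    _ = (∫ y, |y - π| ∂μ) - sgn c * ∫ y, (y - π) ∂μ := by
        rw [integral_sub hsub.abs (hsub.const_mul _), integral_const_mul]
    _ = (∫ y, |y - π| ∂μ) - sgn c * ((∫ y, y ∂μ) - π) := by
        rw [integral_sub hμ (integrable_const π), integral_const, probReal_univ, one_smul]

lemma integral_excess_loss_eq {μ : Measure ℝ} [IsProbabilityMeasure μ]
    (hμ : Integrable (fun y => y) μ) (π c : ℝ) :
    ∫ y, |y - π| * |sgn c - sgn (y - π)| ∂μ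
        - ∫ y, |y - π| * |sgn (sgn ((∫ y, y ∂μ) - π)) - sgn (y - π)| ∂μ
      = |(∫ y, y ∂μ) - π| * |sgn c - sgn ((∫ y, y ∂μ) - π)| := by
  rw [integral_abs_sub_mul_abs_sgn_sub_sgn hμ, integral_abs_sub_mul_abs_sgn_sub_sgn hμ,
    abs_mul_abs_sgn_sub_sgn, sgn_sgn, sgn_mul_self]
  ring

lemma le_of_sum_filter_le_eq_zero {Ω : Type*} [Fintype Ω] {p f : Ω → ℝ} {ρ : ℝ}
    (hp0 : ∀ ω, 0 ≤ p ω) (hf : ∀ ω, 0 ≤ f ω)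
    (h : ∀ t : ℝ, 0 ≤ t → t < ρ → (∑ ω ∈ Finset.univ.filter (fun ω => f ω ≤ t), p ω) = 0)
    {ω : Ω} (hω : p ω ≠ 0) : ρ ≤ f ω := by
  by_contra! hlt
  refine hω ((Finset.sum_eq_zero_iff_of_nonneg fun i _ => hp0 i).mp (h _ (hf ω) hlt) ω ?_)
  exact Finset.mem_filter.mpr ⟨Finset.mem_univ ω, le_rfl⟩

theorem stmt5_general {Ω : Type*} [Fintype Ω] (π : ℝ) (ρ : ℝ)
    (p : Ω → ℝ) (hp0 : ∀ ω, 0 ≤ p ω)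
    (Θ : Ω → ℝ)
    (μ : Ω → Measure ℝ)
    (hμ : ∀ ω, IsProbabilityMeasure (μ ω))
    (hsupp : ∀ ω, μ ω (Set.Icc (-1 : ℝ) 1)ᶜ = 0)
    (hmean : ∀ ω, (∫ y, y ∂(μ ω)) = Θ ω)
    (hsmooth : ∀ t : ℝ, 0 ≤ t → t < ρ →
      (∑ ω ∈ Finset.univ.filter (fun ω => |Θ ω - π| ≤ t), p ω) = 0)
    (Z : Ω → ℝ) :
    (ρ / 2) * MAE p (fun ω => sgn (Z ω)) (fun ω => sgn (sgn (Θ ω - π)))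
      ≤ Risk p μ π Z - Risk p μ π (fun ω => sgn (Θ ω - π)) := by
  unfold Risk MAE
  rw [Finset.mul_sum, ← Finset.sum_sub_distrib]
  refine Finset.sum_le_sum fun ω _ => ?_
  have excess := integral_excess_loss_eq (μ := μ ω)
    (integrable_id_of_measure_compl_Icc_eq_zero (hsupp ω)) π (Z ω)
  rw [hmean ω] at excess
  rw [← mul_sub, excess, mul_left_comm]
  simp only [sgn_sgn]
  rcases eq_or_ne (p ω) 0 with hp | hp
  · simp [hp]
  have hρ : ρ ≤ |Θ ω - π| := le_of_sum_filter_le_eq_zero hp0 (fun _ => abs_nonneg _) hsmooth hp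
  have hρ2 : ρ / 2 ≤ |Θ ω - π| := by linarith [abs_nonneg (Θ ω - π)]
  exact mul_le_mul_of_nonneg_left (mul_le_mul_of_nonneg_right hρ2 (abs_nonneg _)) (hp0 ω)

/-- the `α = ∞` smoothness case: if no `p`-mass lies within distance `t < ρ`
of the level `π`, then `Risk(Z) − Risk(Θ̄) ≥ (ρ/2)·MAE(sgn Z, sgn Θ̄)` where
`Θ̄ = sgn(Θ − π)`. -/
theorem stmt5 {Ω : Type*} [Fintype Ω] (π : ℝ) (hπ : π ∈ Set.Icc (-1 : ℝ) 1) (ρ : ℝ)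
    (hρ : 0 < ρ)
    (p : Ω → ℝ) (hp0 : ∀ ω, 0 ≤ p ω) (hp1 : ∑ ω, p ω = 1)
    (Θ : Ω → ℝ) (hΘ : ∀ ω, Θ ω ∈ Set.Icc (-1 : ℝ) 1)
    (μ : Ω → Measure ℝ)
    (hμ : ∀ ω, IsProbabilityMeasure (μ ω))
    (hsupp : ∀ ω, μ ω (Set.Icc (-1 : ℝ) 1)ᶜ = 0)
    (hmean : ∀ ω, (∫ y, y ∂(μ ω)) = Θ ω)
    (hsmooth : ∀ t : ℝ, 0 ≤ t → t < ρ →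
      (∑ ω ∈ Finset.univ.filter (fun ω => |Θ ω - π| ≤ t), p ω) = 0)
    (Z : Ω → ℝ) :
    (ρ / 2) * MAE p (fun ω => sgn (Z ω)) (fun ω => sgn (sgn (Θ ω - π)))
      ≤ Risk p μ π Z - Risk p μ π (fun ω => sgn (Θ ω - π)) :=
  stmt5_general π ρ p hp0 Θ μ hμ hsupp hmean hsmooth Z
end

section
/- Let d ≥ 1 and let I be the d×d identity matrix. Then for every π ∈ ℝ there exists a d×d real matrix B with matrix rank at most 3 such that sgn(B(i,j)) = sgn(I(i,j) − π) for all i,j ∈ {1,…,d}; that is, srank(I − π) ≤ 3 for all π ∈ ℝ. In particular, for the rank-2 matrix A with entries A(i,j) = 2^{−d−1}(2^{j−i} + 2^{i−j}), the matrix (2^{−d} + 2^{−d−3})·J − A (J the all-ones matrix) has entrywise sign pattern equal to 2I − J. -/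
lemma sgn_of_nonneg {y : ℝ} (h : 0 ≤ y) : sgn y = 1 := if_pos h

lemma sgn_of_neg {y : ℝ} (h : y < 0) : sgn y = -1 := if_neg (not_le.mpr h)

lemma Matrix.rank_mul_le_card_inner {m n k R : Type*} [Fintype n] [Fintype k] [Field R]
    (X : Matrix m k R) (Y : Matrix k n R) : (X * Y).rank ≤ Fintype.card k :=
  (X.rank_mul_le_left Y).trans X.rank_le_card_width

lemma rank_of_const_sub_two_zpow_le_three {ι : Type*} [Fintype ι] (e : ι → ℤ) (c s : ℝ) :
    (Matrix.of fun i j => c - s * ((2 : ℝ) ^ (e j - e i) + (2 : ℝ) ^ (e i - e j))).rank ≤ 3 := by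
  have hfactor : (Matrix.of fun i j => c - s * ((2 : ℝ) ^ (e j - e i) + (2 : ℝ) ^ (e i - e j)))
      = Matrix.of (fun i => ![c, -s * (2 : ℝ) ^ (-e i), -s * (2 : ℝ) ^ e i])
        * Matrix.of (fun k j => ![(1 : ℝ), (2 : ℝ) ^ e j, (2 : ℝ) ^ (-e j)] k) := by
    ext i j
    simp only [Matrix.mul_apply, Fin.sum_univ_three, Matrix.of_apply, Matrix.cons_val_zero,
      Matrix.cons_val_one, Matrix.cons_val_two, Matrix.head_cons, Matrix.tail_cons]
    rw [sub_eq_neg_add (e j), sub_eq_neg_add (e i), zpow_add₀ two_ne_zero,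
      zpow_add₀ two_ne_zero]
    ring
  rw [hfactor]
  exact (Matrix.rank_mul_le_card_inner _ _).trans_eq (Fintype.card_fin 3)

lemma five_halves_le_two_zpow_add_two_zpow_neg {m : ℤ} (hm : m ≠ 0) :
    (5 / 2 : ℝ) ≤ (2 : ℝ) ^ m + (2 : ℝ) ^ (-m) := by
  set x : ℝ := (2 : ℝ) ^ m with hx
  have hxpos : 0 < x := zpow_pos two_pos m
  have hfar : 2 ≤ x ∨ x ≤ 1 / 2 := by
    rcases hm.lt_or_gt with h | h
    · right
      calc x ≤ (2 : ℝ) ^ (-1 : ℤ) := zpow_le_zpow_right₀ one_le_two (by omega)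
        _ = 1 / 2 := by norm_num
    · left
      calc (2 : ℝ) = (2 : ℝ) ^ (1 : ℤ) := (zpow_one 2).symm
        _ ≤ x := zpow_le_zpow_right₀ one_le_two h
  have hprod : 0 ≤ (x - 2) * (x - 1 / 2) := by
    rcases hfar with h | h <;> nlinarith
  have hidentity : x + x⁻¹ - 5 / 2 = (x - 2) * (x - 1 / 2) / x := by
    field_simp
    ring
  rw [zpow_neg, ← hx, ← sub_nonneg, hidentity]
  exact div_nonneg hprod hxpos.le

lemma sgn_two_zpow_entry (n m : ℤ) :
    sgn ((2 : ℝ) ^ n + (2 : ℝ) ^ (n - 3) - (2 : ℝ) ^ (n - 1) * ((2 : ℝ) ^ m + (2 : ℝ) ^ (-m)))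
      = if m = 0 then 1 else -1 := by
  have h3 : (2 : ℝ) ^ (n - 3) = 2 ^ n / 8 := by rw [zpow_sub₀ two_ne_zero]; norm_num
  have h1 : (2 : ℝ) ^ (n - 1) = 2 ^ n / 2 := by rw [zpow_sub₀ two_ne_zero]; norm_num
  have htpos : (0 : ℝ) < 2 ^ n := zpow_pos two_pos n
  rw [h3, h1]
  split_ifs with hm
  · subst hm
    exact sgn_of_nonneg (by norm_num; linarith)
  · have := mul_le_mul_of_nonneg_left (five_halves_le_two_zpow_add_two_zpow_neg hm) htpos.le
    exact sgn_of_neg (by linarith)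

lemma sgn_one_sub_of_mem_Ioc {n : Type*} [DecidableEq n] {π : ℝ} (hπ : π ∈ Set.Ioc 0 1) (i j : n) :
    sgn ((1 : Matrix n n ℝ) i j - π) = if i = j then 1 else -1 := by
  rw [Matrix.one_apply]
  split_ifs
  · exact sgn_of_nonneg (by linarith [hπ.2])
  · exact sgn_of_neg (by linarith [hπ.1])

lemma sgn_one_sub_of_notMem_Ioc {n : Type*} [DecidableEq n] {π : ℝ} (hπ : π ∉ Set.Ioc 0 1)
    (i j : n) : sgn ((1 : Matrix n n ℝ) i j - π) = sgn (-π) := by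
  rw [Set.mem_Ioc, not_and_or, not_lt, not_le] at hπ
  rw [Matrix.one_apply]
  rcases hπ with hπ | hπ
  · refine (sgn_of_nonneg ?_).trans (sgn_of_nonneg (by linarith)).symm
    split_ifs <;> linarith
  · refine (sgn_of_neg ?_).trans (sgn_of_neg (by linarith)).symm
    split_ifs <;> linarith

lemma Matrix.rank_of_const_le_one {m n : Type*} [Fintype n] (a : ℝ) :
    (Matrix.of fun (_ : m) (_ : n) => a).rank ≤ 1 := by
  have hrankOne : (Matrix.of fun (_ : m) (_ : n) => a) = Matrix.vecMulVec (fun _ => a) 1 := by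
    ext
    simp [Matrix.vecMulVec_apply]
  exact hrankOne ▸ Matrix.rank_vecMulVec_le _ _

theorem stmt15_general (d : ℕ)
    (A : Matrix (Fin d) (Fin d) ℝ)
    (hA : ∀ i j : Fin d, A i j
      = (2 : ℝ) ^ (-(d : ℤ) - 1)
        * ((2 : ℝ) ^ ((j.val : ℤ) - (i.val : ℤ)) + (2 : ℝ) ^ ((i.val : ℤ) - (j.val : ℤ)))) :
    (∀ π : ℝ, ∃ B : Matrix (Fin d) (Fin d) ℝ, B.rank ≤ 3 ∧
      ∀ i j : Fin d, sgn (B i j) = sgn ((1 : Matrix (Fin d) (Fin d) ℝ) i j - π)) ∧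
    (∀ i j : Fin d,
      sgn (((2 : ℝ) ^ (-(d : ℤ)) + (2 : ℝ) ^ (-(d : ℤ) - 3)) - A i j)
        = if i = j then (1 : ℝ) else -1) := by
  set c : ℝ := (2 : ℝ) ^ (-(d : ℤ)) + (2 : ℝ) ^ (-(d : ℤ) - 3)
  have hpattern : ∀ i j : Fin d, sgn (c - A i j) = if i = j then 1 else -1 := by
    intro i j
    rw [hA, show (i : ℤ) - j = -((j : ℤ) - i) by ring, sgn_two_zpow_entry]
    simp only [sub_eq_zero, Nat.cast_inj, Fin.val_inj, eq_comm]
  refine ⟨fun π => ?_, hpattern⟩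
  by_cases hπ : π ∈ Set.Ioc 0 1
  · refine ⟨Matrix.of fun i j => c - A i j, ?_, fun i j => ?_⟩
    · simp_rw [hA]
      exact rank_of_const_sub_two_zpow_le_three (fun i : Fin d => (i : ℤ)) _ _
    · rw [Matrix.of_apply, hpattern, sgn_one_sub_of_mem_Ioc hπ]
  · exact ⟨Matrix.of fun _ _ => -π, (Matrix.rank_of_const_le_one _).trans (by norm_num),
      fun i j => (sgn_one_sub_of_notMem_Ioc hπ i j).symm⟩

/-- the identity matrix has `srank(I − π) ≤ 3` for every `π ∈ ℝ`; in
particular, for the rank-2 matrix `A(i,j) = 2^{−d−1}(2^{j−i} + 2^{i−j})`, the matrix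
`(2^{−d} + 2^{−d−3})·J − A` (with `J` all-ones) has sign pattern `2I − J`, i.e. sign `+1`
on the diagonal and `−1` off the diagonal. -/
theorem stmt15 (d : ℕ) (hd : 1 ≤ d)
    (A : Matrix (Fin d) (Fin d) ℝ)
    (hA : ∀ i j : Fin d, A i j
      = (2 : ℝ) ^ (-(d : ℤ) - 1)
        * ((2 : ℝ) ^ ((j.val : ℤ) - (i.val : ℤ)) + (2 : ℝ) ^ ((i.val : ℤ) - (j.val : ℤ)))) :
    (∀ π : ℝ, ∃ B : Matrix (Fin d) (Fin d) ℝ, B.rank ≤ 3 ∧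
      ∀ i j : Fin d, sgn (B i j) = sgn ((1 : Matrix (Fin d) (Fin d) ℝ) i j - π)) ∧
    (∀ i j : Fin d,
      sgn (((2 : ℝ) ^ (-(d : ℤ)) + (2 : ℝ) ^ (-(d : ℤ) - 3)) - A i j)
        = if i = j then (1 : ℝ) else -1) :=
  stmt15_general d A hA
end
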